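/- arXiv:1209.2069 — 4 statements merged into one kernel-verified Lean document; each statement's English description precedes it below -/
import Mathlib

section
/- Let l > 0 and let u : ℝ → ℝ be continuously differentiable on [0, l]. Then ( sup_{t∈[0,l]} |u(t)| )² ≤ coth(l) · ∫₀^l ( u(t)² + u'(t)² ) dt, where coth(l) = cosh(l)/sinh(l). -/
/-!
If `w` solves the Riccati equation `w' = 1 - w²`, then
`(u² w)' = u² + u'² - (u w - u')² ≤ u² + u'²`, so integrating over `[a, b]` bounds
`u(b)² w(b) - u(a)² w(a)` by `∫ₐᵇ (u² + u'²)`. For a point `s ∈ [0, l]` take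
`w(t) = tanh t` on `[0, s]` and `w(t) = tanh (t - l)` on `[s, l]`; these vanish at `0` and `l`
respectively, and adding the two bounds gives
`u(s)² (tanh s + tanh (l - s)) ≤ ∫₀ˡ (u² + u'²)`. Subadditivity of `tanh` on `[0, ∞)` turns
the left side into `u(s)² tanh l`, and `coth l = 1 / tanh l`.
-/

open Real Set MeasureTheory intervalIntegral

namespace Real

theorem hasDerivAt_tanh (x : ℝ) : HasDerivAt tanh (1 - tanh x ^ 2) x := by
  have hcosh : cosh x ≠ 0 := (cosh_pos x).ne'
  have h : HasDerivAt (fun y => sinh y / cosh y)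
      ((cosh x * cosh x - sinh x * sinh x) / cosh x ^ 2) x :=
    (hasDerivAt_sinh x).div (hasDerivAt_cosh x) hcosh
  rw [show tanh = fun y => sinh y / cosh y from funext tanh_eq_sinh_div_cosh]
  convert h using 1
  field_simp

theorem tanh_add_le {x y : ℝ} (hx : 0 ≤ x) (hy : 0 ≤ y) :
    tanh (x + y) ≤ tanh x + tanh y := by
  have hcx := cosh_pos x
  have hcy := cosh_pos y
  have hsx : 0 ≤ sinh x := sinh_nonneg_iff.2 hx
  have hsy : 0 ≤ sinh y := sinh_nonneg_iff.2 hy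
  simp only [tanh_eq_sinh_div_cosh]
  rw [div_add_div _ _ hcx.ne' hcy.ne', div_le_div_iff₀ (cosh_pos _) (mul_pos hcx hcy),
    sinh_add, cosh_add]
  nlinarith [mul_nonneg (mul_nonneg hsx hsy)
    (add_nonneg (mul_nonneg hsx hcy.le) (mul_nonneg hcx.le hsy))]

end Real

theorem sq_iSup_abs_le {ι : Type*} [Nonempty ι] {f : ι → ℝ} {C : ℝ}
    (h : ∀ i, f i ^ 2 ≤ C) :
    (⨆ i, |f i|) ^ 2 ≤ C := by
  have hC : 0 ≤ C := (sq_nonneg _).trans (h (Classical.arbitrary ι))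
  calc (⨆ i, |f i|) ^ 2 ≤ √C ^ 2 :=
        pow_le_pow_left₀ (Real.iSup_nonneg fun i => abs_nonneg _)
          (ciSup_le fun i => abs_le_sqrt (h i)) 2
    _ = C := sq_sqrt hC

theorem sq_mul_sub_sq_mul_le_integral_of_riccati {a b : ℝ} (hab : a ≤ b) {u u' w : ℝ → ℝ}
    (hu : ∀ t ∈ Icc a b, HasDerivAt u (u' t) t)
    (hw : ∀ t ∈ Icc a b, HasDerivAt w (1 - w t ^ 2) t)
    (hint : IntegrableOn (fun t => u t ^ 2 + u' t ^ 2) (Icc a b)) :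
    u b ^ 2 * w b - u a ^ 2 * w a ≤ ∫ t in a..b, (u t ^ 2 + u' t ^ 2) := by
  have hderiv : ∀ t ∈ Icc a b, HasDerivAt (fun t => u t ^ 2 * w t)
      (2 * u t * u' t * w t + u t ^ 2 * (1 - w t ^ 2)) t := fun t ht =>
    (((hu t ht).fun_pow 2).fun_mul (hw t ht)).congr_deriv (by norm_num)
  refine sub_le_integral_of_hasDeriv_right_of_le hab
    (fun t ht => (hderiv t ht).continuousAt.continuousWithinAt)
    (fun t ht => (hderiv t (Ioo_subset_Icc_self ht)).hasDerivWithinAt) hint fun t _ => ?_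
  nlinarith [sq_nonneg (u t * w t - u' t)]

theorem sq_mul_tanh_le_integral_sq_add_sq {a b : ℝ} {u u' : ℝ → ℝ}
    (hu : ∀ t ∈ Icc a b, HasDerivAt u (u' t) t)
    (hint : IntegrableOn (fun t => u t ^ 2 + u' t ^ 2) (Icc a b)) {s : ℝ} (hs : s ∈ Icc a b) :
    u s ^ 2 * tanh (b - a) ≤ ∫ t in a..b, (u t ^ 2 + u' t ^ 2) := by
  have hsa : Icc a s ⊆ Icc a b := Icc_subset_Icc_right hs.2
  have hsb : Icc s b ⊆ Icc a b := Icc_subset_Icc_left hs.1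
  have tanh_riccati (c t : ℝ) :
      HasDerivAt (fun t => tanh (t - c)) (1 - tanh (t - c) ^ 2) t := by
    simpa using (hasDerivAt_tanh (t - c)).comp_sub_const t c
  have hleft := sq_mul_sub_sq_mul_le_integral_of_riccati hs.1 (fun t ht => hu t (hsa ht))
    (fun t _ => tanh_riccati a t) (hint.mono_set hsa)
  have hright := sq_mul_sub_sq_mul_le_integral_of_riccati hs.2 (fun t ht => hu t (hsb ht))
    (fun t _ => tanh_riccati b t) (hint.mono_set hsb)
  have hsplit := integral_add_adjacent_intervals
    ((intervalIntegrable_iff_integrableOn_Icc_of_le hs.1).2 (hint.mono_set hsa))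
    ((intervalIntegrable_iff_integrableOn_Icc_of_le hs.2).2 (hint.mono_set hsb))
  have hsub : tanh (b - a) ≤ tanh (s - a) + tanh (b - s) := by
    simpa using tanh_add_le (sub_nonneg.2 hs.1) (sub_nonneg.2 hs.2)
  have htanh_sub : tanh (s - b) = - tanh (b - s) := by rw [← tanh_neg, neg_sub]
  simp only [sub_self, tanh_zero, mul_zero, sub_zero, htanh_sub] at hleft hright
  nlinarith [mul_le_mul_of_nonneg_left hsub (sq_nonneg (u s))]

/-- Sharp one-dimensional Sobolev embedding
`W^{1,2}((0,l)) ⊂ C([0,l])`: for `u` continuously differentiable on `[0, l]`,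
`(sup_{[0,l]} |u|)² ≤ coth(l) · ∫₀^l (u² + (u')²)`. -/
theorem stmt_5 (l : ℝ) (hl : 0 < l) (u u' : ℝ → ℝ)
    (hderiv : ∀ t ∈ Set.Icc 0 l, HasDerivAt u (u' t) t)
    (hcont : ContinuousOn u' (Set.Icc 0 l)) :
    (⨆ t : Set.Icc 0 l, |u t|) ^ 2 ≤
      Real.cosh l / Real.sinh l * ∫ t in (0:ℝ)..l, (u t ^ 2 + u' t ^ 2) := by
  have : Nonempty (Icc 0 l) := ⟨⟨0, left_mem_Icc.2 hl.le⟩⟩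
  have hu : ContinuousOn u (Icc 0 l) := fun t ht =>
    (hderiv t ht).continuousAt.continuousWithinAt
  have hint : IntegrableOn (fun t => u t ^ 2 + u' t ^ 2) (Icc 0 l) :=
    ((hu.pow 2).add (hcont.pow 2)).integrableOn_Icc
  have hcoth : cosh l / sinh l = (tanh l)⁻¹ := by rw [tanh_eq_sinh_div_cosh, inv_div]
  have htanh : 0 < tanh l := by
    rw [tanh_eq_sinh_div_cosh]; exact div_pos (sinh_pos_iff.2 hl) (cosh_pos l)
  refine sq_iSup_abs_le fun t => ?_
  rw [hcoth, inv_mul_eq_div, le_div_iff₀ htanh]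
  simpa using sq_mul_tanh_le_integral_sq_add_sq hderiv hint t.2
end

section
/- Let l > 0 and let u : ℝ → ℝ be continuously differentiable on [0, l]. Then u(0)² + u(l)² ≤ 2·coth(l) · ∫₀^l ( u(t)² + u'(t)² ) dt, where coth(l) = cosh(l)/sinh(l). -/
/-!
With `a = u 0`, integrating the derivative of `-u t * sinh (l - t)` gives
`a * sinh l = ∫₀^l (u cosh (l - t) - u' sinh (l - t))`, while
`∫₀^l (cosh² (l - t) + sinh² (l - t)) = sinh l * cosh l`. Cauchy–Schwarz, in the form of a
pointwise AM–GM inequality, turns the first identity into `a² sinh l ≤ cosh l ∫₀^l (u² + u'²)`.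
The same bound at `l` follows by applying this to `t ↦ u (l - t)`; adding the two and dividing
by `sinh l` gives the claim.
-/

open Real Set MeasureTheory intervalIntegral

lemma integral_cosh_sub_sq_add_sinh_sub_sq (l : ℝ) :
    ∫ t in (0:ℝ)..l, (cosh (l - t) ^ 2 + sinh (l - t) ^ 2) = sinh l * cosh l := by
  have hG : ∀ t ∈ uIcc 0 l, HasDerivAt (fun s => -(sinh (l - s) * cosh (l - s)))
      (cosh (l - t) ^ 2 + sinh (l - t) ^ 2) t := fun t _ =>
    (((hasDerivAt_sinh (l - t)).comp_const_sub l t).mul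
      ((hasDerivAt_cosh (l - t)).comp_const_sub l t)).neg.congr_deriv (by ring)
  rw [integral_eq_sub_of_hasDerivAt hG (Continuous.intervalIntegrable (by fun_prop) _ _)]
  simp

section EndpointBound

variable {l : ℝ} {u u' : ℝ → ℝ}

lemma integral_mul_cosh_sub_sub_mul_sinh_sub (hl : 0 ≤ l)
    (hderiv : ∀ t ∈ Icc 0 l, HasDerivAt u (u' t) t)
    (hint : IntervalIntegrable (fun t => u t * cosh (l - t) - u' t * sinh (l - t)) volume 0 l) :
    ∫ t in (0:ℝ)..l, (u t * cosh (l - t) - u' t * sinh (l - t)) = u 0 * sinh l := by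
  have hF : ∀ t ∈ uIcc 0 l, HasDerivAt (fun s => -(u s * sinh (l - s)))
      (u t * cosh (l - t) - u' t * sinh (l - t)) t := fun t ht => by
    rw [uIcc_of_le hl] at ht
    exact ((hderiv t ht).mul ((hasDerivAt_sinh (l - t)).comp_const_sub l t)).neg.congr_deriv
      (by ring)
  rw [integral_eq_sub_of_hasDerivAt hF hint]
  simp

lemma sq_apply_zero_mul_sinh_le (hl : 0 ≤ l)
    (hderiv : ∀ t ∈ Icc 0 l, HasDerivAt u (u' t) t) (hcont : ContinuousOn u' (Icc 0 l)) :
    u 0 ^ 2 * sinh l ≤ cosh l * ∫ t in (0:ℝ)..l, (u t ^ 2 + u' t ^ 2) := by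
  have hucont : ContinuousOn u (Icc 0 l) := fun t ht =>
    (hderiv t ht).continuousAt.continuousWithinAt
  have hint {f : ℝ → ℝ} (hf : ContinuousOn f (Icc 0 l)) : IntervalIntegrable f volume 0 l :=
    (uIcc_of_le hl ▸ hf).intervalIntegrable
  have hident := integral_mul_cosh_sub_sub_mul_sinh_sub hl hderiv (hint (by fun_prop))
  -- weights chosen so that equality holds for `u t = cosh (l - t)`
  have hamgm : ∫ t in (0:ℝ)..l, 2 * cosh l * u 0 * (u t * cosh (l - t) - u' t * sinh (l - t))
      ≤ ∫ t in (0:ℝ)..l, (u 0 ^ 2 * (cosh (l - t) ^ 2 + sinh (l - t) ^ 2)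
          + cosh l ^ 2 * (u t ^ 2 + u' t ^ 2)) := by
    refine integral_mono_on hl (hint (by fun_prop)) (hint (by fun_prop)) fun t _ => ?_
    nlinarith [sq_nonneg (u 0 * cosh (l - t) - cosh l * u t),
      sq_nonneg (u 0 * sinh (l - t) + cosh l * u' t)]
  rw [intervalIntegral.integral_const_mul, hident,
    integral_add (hint (by fun_prop)) (hint (by fun_prop)), intervalIntegral.integral_const_mul,
    intervalIntegral.integral_const_mul, integral_cosh_sub_sq_add_sinh_sub_sq] at hamgm
  nlinarith [cosh_pos l]

lemma sq_apply_right_mul_sinh_le (hl : 0 ≤ l)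
    (hderiv : ∀ t ∈ Icc 0 l, HasDerivAt u (u' t) t) (hcont : ContinuousOn u' (Icc 0 l)) :
    u l ^ 2 * sinh l ≤ cosh l * ∫ t in (0:ℝ)..l, (u t ^ 2 + u' t ^ 2) := by
  have hreflect : MapsTo (fun t => l - t) (Icc 0 l) (Icc 0 l) := fun t ht =>
    ⟨by linarith [ht.2], by linarith [ht.1]⟩
  have h := sq_apply_zero_mul_sinh_le (u := fun t => u (l - t)) (u' := fun t => -u' (l - t)) hl
    (fun t ht => (hderiv (l - t) (hreflect ht)).comp_const_sub l t)
    (hcont.comp (by fun_prop) hreflect).neg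
  simpa only [sub_zero, neg_sq, integral_comp_sub_left (fun t => u t ^ 2 + u' t ^ 2), sub_self]
    using h

end EndpointBound

/-- Endpoint estimate from the sharp Sobolev embedding: for `u`
continuously differentiable on `[0, l]`,
`u(0)² + u(l)² ≤ 2·coth(l) · ∫₀^l (u² + (u')²)`. -/
theorem stmt_6 (l : ℝ) (hl : 0 < l) (u u' : ℝ → ℝ)
    (hderiv : ∀ t ∈ Set.Icc 0 l, HasDerivAt u (u' t) t)
    (hcont : ContinuousOn u' (Set.Icc 0 l)) :
    u 0 ^ 2 + u l ^ 2 ≤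
      2 * (Real.cosh l / Real.sinh l) * ∫ t in (0:ℝ)..l, (u t ^ 2 + u' t ^ 2) := by
  have hsinh : 0 < sinh l := sinh_pos_iff.mpr hl
  have hleft := sq_apply_zero_mul_sinh_le hl.le hderiv hcont
  have hright := sq_apply_right_mul_sinh_le hl.le hderiv hcont
  rw [mul_div_assoc', div_mul_eq_mul_div, le_div_iff₀ hsinh]
  linarith
end

section
/- Let ω > 0, l > 0 and a, b ∈ ℝ, and let w(t) = a + ((b − a)/l)·t be the linear interpolation on [0, l] with w(0) = a, w(l) = b. Then ω·l·∫₀^l ( w(t)² + w'(t)² ) dt ≤ ω·(a − b)² + (ω·l²/2)·(a² + b²). In particular, ω·l·∫₀^l w'(t)² dt = ω·(a − b)². -/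
/-! The linear interpolant has constant derivative `(b - a) / l`, so the derivative part of the
norm is exactly `ω (a - b)²`, and `∫₀^l w² = l (a² + ab + b²) / 3`. The inequality then reduces to
`(a² + ab + b²) / 3 ≤ (a² + b²) / 2`, i.e. to `0 ≤ (a - b)² / 6`. -/

theorem integral_sq_affine (a c l : ℝ) :
    ∫ t in (0:ℝ)..l, (a + c * t) ^ 2 = a ^ 2 * l + a * c * l ^ 2 + c ^ 2 * l ^ 3 / 3 := by
  -- `t ^ 1` rather than `t`, so that `integral_pow` applies to the middle term
  have hexpand : ∀ t : ℝ, (a + c * t) ^ 2 = a ^ 2 + 2 * a * c * t ^ 1 + c ^ 2 * t ^ 2 :=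
    fun t => by ring
  simp only [hexpand]
  rw [intervalIntegral.integral_add (Continuous.intervalIntegrable (by fun_prop) _ _)
      (Continuous.intervalIntegrable (by fun_prop) _ _),
    intervalIntegral.integral_add (Continuous.intervalIntegrable (by fun_prop) _ _)
      (Continuous.intervalIntegrable (by fun_prop) _ _)]
  simp only [intervalIntegral.integral_const, intervalIntegral.integral_const_mul,
    integral_pow, smul_eq_mul]
  ring

theorem integral_sq_linear_interpolation (a b l : ℝ) (hl : l ≠ 0) :
    ∫ t in (0:ℝ)..l, (a + (b - a) / l * t) ^ 2 = l * (a ^ 2 + a * b + b ^ 2) / 3 := by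
  rw [integral_sq_affine]
  field_simp
  ring

/-- For the linear interpolation `w(t) = a + ((b−a)/l)·t` on `[0, l]`
and an edge weight `ω > 0`, the edge `W^{1,2}`-norm of `w` is dominated by the graph
energy contribution: `ω·l·∫₀^l (w² + (w')²) ≤ ω·(a−b)² + (ω·l²/2)·(a² + b²)`; moreover
`ω·l·∫₀^l (w')² = ω·(a−b)²`. -/
theorem stmt_9 (ω l a b : ℝ) (hω : 0 < ω) (hl : 0 < l) (w : ℝ → ℝ)
    (hw : ∀ t, w t = a + (b - a) / l * t) :
    (ω * l * ∫ t in (0:ℝ)..l, (w t ^ 2 + deriv w t ^ 2) ≤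
        ω * (a - b) ^ 2 + ω * l ^ 2 / 2 * (a ^ 2 + b ^ 2)) ∧
      ω * l * ∫ t in (0:ℝ)..l, deriv w t ^ 2 = ω * (a - b) ^ 2 := by
  obtain rfl : w = fun t => a + (b - a) / l * t := funext hw
  have hderiv : ∀ t, deriv (fun t => a + (b - a) / l * t) t = (b - a) / l := fun t => by simp
  have henergy : ω * l * ∫ t in (0:ℝ)..l, deriv (fun t => a + (b - a) / l * t) t ^ 2 =
      ω * (a - b) ^ 2 := by
    simp only [hderiv, intervalIntegral.integral_const, sub_zero, smul_eq_mul]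
    field_simp
    ring
  refine ⟨?_, henergy⟩
  rw [intervalIntegral.integral_add (Continuous.intervalIntegrable (by fun_prop) _ _)
      (by simp only [hderiv]; exact intervalIntegrable_const),
    mul_add, henergy, integral_sq_linear_interpolation a b l hl.ne']
  have hmean : (a ^ 2 + a * b + b ^ 2) / 3 ≤ (a ^ 2 + b ^ 2) / 2 := by
    nlinarith [sq_nonneg (a - b)]
  nlinarith [mul_le_mul_of_nonneg_left hmean (by positivity : (0:ℝ) ≤ ω * l ^ 2)]
end

section
/- Fix c ∈ ℝ and an integer n ≥ 1. Suppose f : ℝ → ℝ is differentiable and satisfies: f(x) = 0 for x ≤ c + 1/(n+2); f(x) = x − (c + 1/(n+1)) for x ≥ c + 1/n; and for x ∈ (c + 1/(n+2), c + 1/n), f(x) > max(x − (c + 1/(n+1)), 0) and 0 < f'(x) < 1. Then there exists a function g : ℝ → ℝ such that g(0) = 0, |g(s) − g(t)| ≤ |s − t| for all s, t ∈ ℝ (so g is a normal contraction), f(x) = g(max(x − c, 0)) for every x ∈ ℝ, and |g(s) − s| ≤ 1/n for every s ≥ 0. -/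
/-!
The derivative of `f` lies in `[0, 1]` everywhere: it is `0` resp. `1` on the closed half-lines
where `f` is affine, gluing points included. So `f` is `1`-Lipschitz and `g s := f (c + max s 0)`
is a normal contraction with `g s ≤ g 0 + s = s` for `s ≥ 0`. From below, `f` dominates
`x ↦ x - (c + 1/(n+1))`, whence `s - 1/(n+1) ≤ g s`.
-/

open Set

theorem deriv_eq_of_eqOn {𝕜 F : Type*} [NontriviallyNormedField 𝕜] [NormedAddCommGroup F]
    [NormedSpace 𝕜 F] {f g : 𝕜 → F} {s : Set 𝕜} {a : 𝕜} {g' : F}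
    (hs : UniqueDiffWithinAt 𝕜 s a) (ha : a ∈ s) (hf : DifferentiableAt 𝕜 f a)
    (hg : HasDerivAt g g' a) (hfg : EqOn f g s) : deriv f a = g' := by
  rw [← hf.derivWithin hs, derivWithin_congr hfg (hfg ha), hg.hasDerivWithinAt.derivWithin hs]

section Ramp

variable {f : ℝ → ℝ} {a b k : ℝ}

theorem lipschitzWith_one_of_ramp (hf : Differentiable ℝ f) (h0 : ∀ x ≤ a, f x = 0)
    (h1 : ∀ x ≥ b, f x = x - k) (hmid : ∀ x ∈ Ioo a b, |deriv f x| ≤ 1) :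
    LipschitzWith 1 f := by
  refine lipschitzWith_of_nnnorm_deriv_le hf fun x => ?_
  rw [← NNReal.coe_le_coe, coe_nnnorm, Real.norm_eq_abs, NNReal.coe_one]
  rcases le_or_gt x a with hxa | hax
  · rw [deriv_eq_of_eqOn (uniqueDiffOn_Iic a x hxa) hxa (hf x) (hasDerivAt_const x 0) h0]
    simp
  rcases le_or_gt b x with hbx | hxb
  · rw [deriv_eq_of_eqOn (uniqueDiffOn_Ici b x hbx) hbx (hf x) ((hasDerivAt_id x).sub_const k) h1]
    simp
  exact hmid x ⟨hax, hxb⟩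

theorem sub_le_of_ramp (hak : a ≤ k) (h0 : ∀ x ≤ a, f x = 0) (h1 : ∀ x ≥ b, f x = x - k)
    (hmid : ∀ x ∈ Ioo a b, max (x - k) 0 < f x) (x : ℝ) : x - k ≤ f x := by
  rcases le_or_gt x a with hxa | hax
  · rw [h0 x hxa]
    linarith
  rcases le_or_gt b x with hbx | hxb
  · rw [h1 x hbx]
  exact (le_max_left _ _).trans (hmid x ⟨hax, hxb⟩).le

end Ramp

theorem abs_sub_self_le_of_lipschitzWith_one {g : ℝ → ℝ} {ε s : ℝ} (hg : LipschitzWith 1 g)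
    (hg0 : g 0 = 0) (hs : 0 ≤ s) (hlow : s - ε ≤ g s) : |g s - s| ≤ ε := by
  have hup : g s ≤ s := by
    have := hg.dist_le_mul s 0
    rw [Real.dist_eq, Real.dist_eq, hg0, sub_zero, sub_zero, abs_of_nonneg hs, NNReal.coe_one,
      one_mul] at this
    linarith [le_abs_self (g s)]
  rw [abs_le]
  constructor <;> linarith

/-- Each smooth approximation `f = f_n` to the truncation function
`x ↦ max(x − c, 0)` can be written as `f = g ∘ max(· − c, 0)` for a normal contraction
`g` with `g(0) = 0` which is uniformly `1/n`-close to the identity on `[0, ∞)`. -/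
theorem stmt_12 (c : ℝ) (n : ℕ) (hn : 1 ≤ n) (f : ℝ → ℝ)
    (hf : Differentiable ℝ f)
    (hf0 : ∀ x, x ≤ c + 1 / ((n : ℝ) + 2) → f x = 0)
    (hf1 : ∀ x, x ≥ c + 1 / (n : ℝ) → f x = x - (c + 1 / ((n : ℝ) + 1)))
    (hfm : ∀ x ∈ Set.Ioo (c + 1 / ((n : ℝ) + 2)) (c + 1 / (n : ℝ)),
      f x > max (x - (c + 1 / ((n : ℝ) + 1))) 0 ∧ 0 < deriv f x ∧ deriv f x < 1) :
    ∃ g : ℝ → ℝ, g 0 = 0 ∧ (∀ s t, |g s - g t| ≤ |s - t|) ∧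
      (∀ x, f x = g (max (x - c) 0)) ∧
      ∀ s, 0 ≤ s → |g s - s| ≤ 1 / (n : ℝ) := by
  have hc : c ≤ c + 1 / ((n : ℝ) + 2) := le_add_of_nonneg_right (by positivity)
  have hak : c + 1 / ((n : ℝ) + 2) ≤ c + 1 / ((n : ℝ) + 1) := by
    gcongr; linarith
  have hkn : 1 / ((n : ℝ) + 1) ≤ 1 / n :=
    one_div_le_one_div_of_le (by exact_mod_cast hn) (by linarith)
  have hf_lip : LipschitzWith 1 f := lipschitzWith_one_of_ramp hf hf0 hf1 fun x hx =>
    abs_le.2 ⟨by linarith [(hfm x hx).2.1], (hfm x hx).2.2.le⟩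
  set g : ℝ → ℝ := fun s => f (c + max s 0)
  have hg_lip : LipschitzWith 1 g := by
    have h_trunc : LipschitzWith 1 fun s : ℝ => c + max s 0 := by
      simpa [Function.comp_def] using
        (isometry_add_left c).lipschitz.comp (LipschitzWith.id.max_const 0)
    simpa [g, Function.comp_def] using hf_lip.comp h_trunc
  have hg0 : g 0 = 0 := by simp [g, hf0 c hc]
  refine ⟨g, hg0, fun s t => ?_, fun x => ?_, fun s hs => ?_⟩
  · simpa [Real.dist_eq] using hg_lip.dist_le_mul s t
  · rcases le_total x c with hxc | hcx
    · simp [g, max_eq_right (sub_nonpos.2 hxc), hf0 x (hxc.trans hc), hf0 c hc]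
    · simp [g, max_eq_left (sub_nonneg.2 hcx)]
  · have hlow := sub_le_of_ramp hak hf0 hf1 (fun x hx => (hfm x hx).1) (c + s)
    refine (abs_sub_self_le_of_lipschitzWith_one hg_lip hg0 hs ?_).trans hkn
    simp only [g, max_eq_left hs]
    linarith
end
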